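/- In the SBBA mechanism with s_{k+1} > b_k and k ≥ 1, a trading seller who raises her ask strictly above b_k is excluded from trade: after re-sorting, the number of efficient deals becomes k - 1 and the deviating seller becomes the (new) k-th seller excluded from trade; hence b_k is the critical ask for sellers. -/

import Mathlib

open scoped Classical

/-! Formalization of the SBBA mechanism on raw bid profiles.
Sellers' asks `A` are sorted ascending and buyers' bids `B` descending using
`Tuple.sort` (which also provides a fixed tie-breaking order).  Ranks are 0-based:
the number of efficient deals `numDeals` is the largest `K` with
`sortedAsks (K-1) ≤ sortedBids (K-1)`; "`s (k+1)`" is `sortedAsks K` and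
"`b k`" is `sortedBids (K-1)`. -/

/-- The `i`-th lowest ask (0-based); arbitrary value `0` beyond the range. -/
noncomputable def sortedAsks {n : ℕ} (A : Fin n → ℝ) : ℕ → ℝ := fun i =>
  if h : i < n then A (Tuple.sort A ⟨i, h⟩) else 0

/-- The `i`-th highest bid (0-based); arbitrary value `0` beyond the range. -/
noncomputable def sortedBids {n : ℕ} (B : Fin n → ℝ) : ℕ → ℝ := fun i =>
  if h : i < n then B (Tuple.sort (fun j => -B j) ⟨i, h⟩) else 0

/-- `K`, the number of efficient deals: the number of positions where the sorted
ask is at most the sorted bid. -/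
noncomputable def numDeals {n : ℕ} (A B : Fin n → ℝ) : ℕ :=
  ((Finset.range n).filter fun i => sortedAsks A i ≤ sortedBids B i).card

/-- 0-based rank of seller `j` in the ascending order of asks. -/
noncomputable def sellerRank {n : ℕ} (A : Fin n → ℝ) (j : Fin n) : ℕ :=
  ((Tuple.sort A).symm j : ℕ)

/-- 0-based rank of buyer `j` in the descending order of bids. -/
noncomputable def buyerRank {n : ℕ} (B : Fin n → ℝ) (j : Fin n) : ℕ :=
  ((Tuple.sort (fun i => -B i)).symm j : ℕ)

/-- Case 1 of SBBA: `s (k+1) ≤ b k` (in particular `k ≥ 1` and `k < n`). -/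
def caseOne {n : ℕ} (A B : Fin n → ℝ) : Prop :=
  1 ≤ numDeals A B ∧ numDeals A B < n ∧
    sortedAsks A (numDeals A B) ≤ sortedBids B (numDeals A B - 1)

/-- The single SBBA trading price `min (s (k+1)) (b k)`:
`s (k+1)` in case 1, `b k` in case 2. -/
noncomputable def price {n : ℕ} (A B : Fin n → ℝ) : ℝ :=
  if caseOne A B then sortedAsks A (numDeals A B) else sortedBids B (numDeals A B - 1)

/-- Buyer `j` wins (trades with probability 1): in case 1 the first `K` buyers win,
in case 2 the first `K - 1` buyers win. -/
noncomputable def buyerWins {n : ℕ} (A B : Fin n → ℝ) (j : Fin n) : Prop :=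
  if caseOne A B then buyerRank B j < numDeals A B
  else buyerRank B j + 1 < numDeals A B

/-- Seller `j`'s probability of trading: `1` for the first `K` sellers in case 1,
`1 - 1/K` for them in case 2 (one of them, uniformly random, is excluded),
and `0` for all other sellers. -/
noncomputable def sellerProb {n : ℕ} (A B : Fin n → ℝ) (j : Fin n) : ℝ :=
  if sellerRank A j < numDeals A B then
    (if caseOne A B then 1 else 1 - 1 / (numDeals A B : ℝ))
  else 0

/-! Write `K` for the number of efficient deals and `b = sortedBids B (K - 1)`. Everything is
governed by `countLE A x`, the number of asks at most `x`: the `i`-th sorted ask is at most `x`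
iff `i < countLE A x`, and changing one ask moves `countLE A x` by at most one. Hence the sorted
asks after the deviation interlace with the old ones, which keeps the first `K - 1` deals
efficient. In case 2 exactly `K` asks are at most `b`, so after the deviating seller's ask jumps
above `b` only `K - 1` remain: the `K`-th deal is lost, and the deviator is ranked at least
`K - 1`. -/

open Finset

section countLE

variable {α : Type*} [LinearOrder α] {n : ℕ}

noncomputable def countLE (A : Fin n → α) (x : α) : ℕ := #{i | A i ≤ x}

lemma countLE_le (A : Fin n → α) (x : α) : countLE A x ≤ n :=
  (card_filter_le _ _).trans_eq (card_fin n)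

lemma countLE_update_add (A : Fin n → α) (j : Fin n) (a x : α) :
    countLE (Function.update A j a) x + (if A j ≤ x then 1 else 0) =
      countLE A x + (if a ≤ x then 1 else 0) := by
  have hupdate : (fun i => if Function.update A j a i ≤ x then 1 else 0) =
      Function.update (fun i => if A i ≤ x then 1 else 0) j (if a ≤ x then 1 else 0) :=
    funext fun i => Function.apply_update (fun _ y => if y ≤ x then 1 else 0) A j a i
  simp only [countLE, card_filter, hupdate, sum_update_of_mem (mem_univ j),
    sum_eq_add_sum_sdiff_singleton_of_mem (mem_univ j) (fun i => if A i ≤ x then 1 else 0)]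
  ring

end countLE

section sorted

variable {n : ℕ}

lemma sortedAsks_le_sortedAsks (A : Fin n → ℝ) {i j : ℕ} (hij : i ≤ j) (hj : j < n) :
    sortedAsks A i ≤ sortedAsks A j := by
  have hi : i < n := hij.trans_lt hj
  simp only [sortedAsks, dif_pos hi, dif_pos hj]
  exact Tuple.monotone_sort A (show (⟨i, hi⟩ : Fin n) ≤ ⟨j, hj⟩ from hij)

lemma sortedAsks_le_iff_lt_countLE (A : Fin n → ℝ) (x : ℝ) {i : ℕ} (hi : i < n) :
    sortedAsks A i ≤ x ↔ i < countLE A x := by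
  have hcount : #{k | (A ∘ Tuple.sort A) k ≤ x} = countLE A x :=
    card_equiv (Tuple.sort A) (by simp)
  rw [← hcount, Tuple.lt_card_le_iff_apply_le_of_monotone (j := ⟨i, hi⟩) (Tuple.monotone_sort A)]
  simp [sortedAsks, hi]

lemma sortedAsks_sellerRank (A : Fin n → ℝ) (j : Fin n) :
    sortedAsks A (sellerRank A j) = A j := by
  simp [sortedAsks, sellerRank]

lemma sortedBids_eq_neg_sortedAsks_neg (B : Fin n → ℝ) (i : ℕ) :
    sortedBids B i = -sortedAsks (fun j => -B j) i := by
  simp only [sortedBids, sortedAsks]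
  split_ifs <;> simp

lemma sortedBids_le_sortedBids (B : Fin n → ℝ) {i j : ℕ} (hij : i ≤ j) (hj : j < n) :
    sortedBids B j ≤ sortedBids B i := by
  simpa only [sortedBids_eq_neg_sortedAsks_neg, neg_le_neg_iff]
    using sortedAsks_le_sortedAsks (fun k => -B k) hij hj

lemma sortedAsks_update_le_sortedAsks_succ (A : Fin n → ℝ) (j : Fin n) (a : ℝ) {i : ℕ}
    (hi : i + 1 < n) : sortedAsks (Function.update A j a) i ≤ sortedAsks A (i + 1) := by
  rw [sortedAsks_le_iff_lt_countLE _ _ (by omega)]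
  have hsucc := (sortedAsks_le_iff_lt_countLE A _ hi).1 le_rfl
  have := countLE_update_add A j a (sortedAsks A (i + 1))
  split_ifs at this <;> omega

end sorted

section numDeals

variable {n : ℕ}

lemma numDeals_le (A B : Fin n → ℝ) : numDeals A B ≤ n :=
  (card_filter_le _ _).trans_eq (card_range n)

lemma numDeals_eq_card_fin (A B : Fin n → ℝ) :
    numDeals A B = #{i : Fin n | sortedAsks A i ≤ sortedBids B i} := by
  rw [numDeals, ← Nat.Iio_eq_range, ← Fin.map_valEmbedding_univ, filter_map, card_map]
  rfl

lemma lt_numDeals_iff (A B : Fin n → ℝ) {i : ℕ} (hi : i < n) :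
    i < numDeals A B ↔ sortedAsks A i ≤ sortedBids B i := by
  rw [numDeals_eq_card_fin, Fin.lt_card_filter_univ_iff_apply_of_imp (j := ⟨i, hi⟩)]
  intro k l hlk hk
  exact ((sortedAsks_le_sortedAsks A hlk k.isLt).trans hk).trans
    (sortedBids_le_sortedBids B hlk k.isLt)

lemma pred_numDeals_le_numDeals_update (A B : Fin n → ℝ) (j : Fin n) (a : ℝ) :
    numDeals A B - 1 ≤ numDeals (Function.update A j a) B := by
  set K := numDeals A B
  have hKn : K ≤ n := numDeals_le A B
  rcases Nat.lt_or_ge K 2 with hK | hK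
  · omega
  suffices K - 2 < numDeals (Function.update A j a) B by omega
  rw [lt_numDeals_iff _ _ (by omega)]
  calc sortedAsks (Function.update A j a) (K - 2)
      ≤ sortedAsks A (K - 1) := by
        simpa [show K - 2 + 1 = K - 1 by omega]
          using sortedAsks_update_le_sortedAsks_succ A j a (i := K - 2) (by omega)
    _ ≤ sortedBids B (K - 1) := (lt_numDeals_iff A B (by omega)).1 (by omega)
    _ ≤ sortedBids B (K - 2) := sortedBids_le_sortedBids B (by omega) (by omega)

lemma countLE_sortedBids_le_numDeals {A B : Fin n → ℝ} (hK : 1 ≤ numDeals A B)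
    (hcase : ¬caseOne A B) : countLE A (sortedBids B (numDeals A B - 1)) ≤ numDeals A B := by
  by_contra! h
  have hKn : numDeals A B < n := h.trans_le (countLE_le _ _)
  exact hcase ⟨hK, hKn, (sortedAsks_le_iff_lt_countLE A _ hKn).2 h⟩

end numDeals

section deviation

variable {n : ℕ} {A B : Fin n → ℝ} {j : Fin n} {a : ℝ}

lemma numDeals_update_le_pred (hcase : ¬caseOne A B) (hrank : sellerRank A j < numDeals A B)
    (ha : sortedBids B (numDeals A B - 1) < a) :
    numDeals (Function.update A j a) B ≤ numDeals A B - 1 := by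
  set K := numDeals A B
  set b := sortedBids B (K - 1)
  have hK1n : K - 1 < n := by have := numDeals_le A B; omega
  have hAj : A j ≤ b :=
    calc A j = sortedAsks A (sellerRank A j) := (sortedAsks_sellerRank A j).symm
      _ ≤ sortedAsks A (K - 1) := sortedAsks_le_sortedAsks A (by omega) hK1n
      _ ≤ b := (lt_numDeals_iff A B hK1n).1 (by omega)
  have hcount : countLE (Function.update A j a) b + 1 ≤ K := by
    have hupdate := countLE_update_add A j a b
    have hle : countLE A b ≤ K := countLE_sortedBids_le_numDeals (by omega) hcase
    simp only [hAj, ha.not_ge, if_true, if_false] at hupdate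
    omega
  by_contra! h
  have := (sortedAsks_le_iff_lt_countLE _ b hK1n).1 ((lt_numDeals_iff _ B hK1n).1 (by omega))
  omega

lemma pred_numDeals_le_sellerRank_update (ha : sortedBids B (numDeals A B - 1) < a) :
    numDeals A B - 1 ≤ sellerRank (Function.update A j a) j := by
  set K := numDeals A B
  set A' := Function.update A j a
  have hKn : K ≤ n := numDeals_le A B
  by_contra! h
  have hle : a ≤ sortedBids B (K - 1) :=
    calc a = sortedAsks A' (sellerRank A' j) := by simp [A', sortedAsks_sellerRank]
      _ ≤ sortedAsks A' (K - 2) := sortedAsks_le_sortedAsks A' (by omega) (by omega)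
      _ ≤ sortedAsks A (K - 2 + 1) := sortedAsks_update_le_sortedAsks_succ A j a (by omega)
      _ = sortedAsks A (K - 1) := by rw [show K - 2 + 1 = K - 1 by omega]
      _ ≤ sortedBids B (K - 1) := (lt_numDeals_iff A B (by omega)).1 (by omega)
  exact ha.not_ge hle

end deviation

theorem sbba_seller_critical_ask_general {n : ℕ} (A B : Fin n → ℝ) (j : Fin n) (a : ℝ)
    (hcase : ¬ caseOne A B)
    (hrank : sellerRank A j < numDeals A B)
    (ha : sortedBids B (numDeals A B - 1) < a) :
    numDeals (Function.update A j a) B = numDeals A B - 1 ∧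
      sellerProb (Function.update A j a) B j = 0 := by
  have hdeals : numDeals (Function.update A j a) B = numDeals A B - 1 :=
    (numDeals_update_le_pred hcase hrank ha).antisymm (pred_numDeals_le_numDeals_update A B j a)
  refine ⟨hdeals, ?_⟩
  have hexcluded : ¬sellerRank (Function.update A j a) j < numDeals (Function.update A j a) B :=
    hdeals ▸ (pred_numDeals_le_sellerRank_update ha).not_gt
  simp only [sellerProb, hexcluded, if_false]

/-- In SBBA case 2 (`s (k+1) > b k`, i.e. not case 1, with `k ≥ 1`), a trading
seller (one of the first `k`) who raises her ask strictly above `b k` is excluded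
from trade: after re-sorting the number of efficient deals becomes `k - 1` and the
deviating seller's trading probability becomes `0`.  Hence `b k` is the critical
ask for sellers in this case. -/
theorem sbba_seller_critical_ask {n : ℕ} (A B : Fin n → ℝ) (j : Fin n) (a : ℝ)
    (hK : 1 ≤ numDeals A B) (hcase : ¬ caseOne A B)
    (hrank : sellerRank A j < numDeals A B)
    (ha : sortedBids B (numDeals A B - 1) < a) :
    numDeals (Function.update A j a) B = numDeals A B - 1 ∧
      sellerProb (Function.update A j a) B j = 0 :=
  sbba_seller_critical_ask_general A B j a hcase hrank ha
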